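/- arXiv:1611.00479 — 2 statements merged into one kernel-verified Lean document; each statement's English description precedes it below -/
import Mathlib

section
/- Let N ≥ 2 and let U be a unitary on ℂ^N ⊗ ℂ^N. Then g_t(U) = 2 if and only if U is locally equivalent to the swap gate, i.e., there exist unitaries A, B on ℂ^N such that U = (A ⊗ B)·S. In particular g_t(S) = 2 and e_p(S) = 0. -/
open Matrix MeasureTheory
open scoped Kronecker

noncomputable section

instance {m n R : Type*} [TopologicalSpace R] : MeasurableSpace (Matrix m n R) := borel _
instance {m n R : Type*} [TopologicalSpace R] : BorelSpace (Matrix m n R) := ⟨rfl⟩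

/-- Reshuffling: `(U_R)_{(i,j),(α,β)} = U_{(i,α),(j,β)}`. -/
def reshuffle (N : ℕ) (U : Matrix (Fin N × Fin N) (Fin N × Fin N) ℂ) :
    Matrix (Fin N × Fin N) (Fin N × Fin N) ℂ :=
  Matrix.of fun p q => U (p.1, q.1) (p.2, q.2)

/-- Partial transpose: `(U_Γ)_{(j,α),(i,β)} = U_{(i,α),(j,β)}`. -/
def ptransp (N : ℕ) (U : Matrix (Fin N × Fin N) (Fin N × Fin N) ℂ) :
    Matrix (Fin N × Fin N) (Fin N × Fin N) ℂ :=
  Matrix.of fun p q => U (q.1, p.2) (p.1, q.2)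

/-- The swap gate `S(x ⊗ y) = y ⊗ x`. -/
def swapGate (N : ℕ) : Matrix (Fin N × Fin N) (Fin N × Fin N) ℂ :=
  Matrix.of fun p q => if p.1 = q.2 ∧ p.2 = q.1 then 1 else 0

/-- `ρ_R(U) = U_R U_R† / N²`. -/
def rhoR (N : ℕ) (U : Matrix (Fin N × Fin N) (Fin N × Fin N) ℂ) :
    Matrix (Fin N × Fin N) (Fin N × Fin N) ℂ :=
  ((N : ℂ) ^ 2)⁻¹ • (reshuffle N U * (reshuffle N U)ᴴ)

/-- `ρ_T(U) = S U_Γ U_Γ† S / N²`. -/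
def rhoT (N : ℕ) (U : Matrix (Fin N × Fin N) (Fin N × Fin N) ℂ) :
    Matrix (Fin N × Fin N) (Fin N × Fin N) ℂ :=
  ((N : ℂ) ^ 2)⁻¹ • (swapGate N * (ptransp N U * (ptransp N U)ᴴ) * swapGate N)

/-- Purity `X(U) = tr(ρ_R(U)²)` (a real number). -/
def Xpur (N : ℕ) (U : Matrix (Fin N × Fin N) (Fin N × Fin N) ℂ) : ℝ :=
  ((rhoR N U * rhoR N U).trace).re

/-- Purity `Y(U) = tr(ρ_T(U)²)` (a real number). -/
def Ypur (N : ℕ) (U : Matrix (Fin N × Fin N) (Fin N × Fin N) ℂ) : ℝ :=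
  ((rhoT N U * rhoT N U).trace).re

/-- Entangling power `e_p(U)`. -/
def ep (N : ℕ) (U : Matrix (Fin N × Fin N) (Fin N × Fin N) ℂ) : ℝ :=
  ((N : ℝ) ^ 2 / ((N : ℝ) + 1) ^ 2) *
    ((1 - Xpur N U) + (1 - Ypur N U) - ((N : ℝ) ^ 2 - 1) / (N : ℝ) ^ 2)

/-- Gate typicality `g_t(U)`. -/
def gateTyp (N : ℕ) (U : Matrix (Fin N × Fin N) (Fin N × Fin N) ℂ) : ℝ :=
  ((N : ℝ) ^ 2 / ((N : ℝ) ^ 2 - 1)) *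
    (Ypur N U - Xpur N U + ((N : ℝ) ^ 2 - 1) / (N : ℝ) ^ 2)

/-- Mean entangling power over the Haar measure, `ē_p = (N-1)²/(N²+1)`. -/
def epBar (N : ℕ) : ℝ := ((N : ℝ) - 1) ^ 2 / ((N : ℝ) ^ 2 + 1)

/-- `iterGate U W k = U · W_{k-1} · U ⋯ W_0 · U`, i.e. `U^(k+1)` with `k` interlacing
local gates `W_0, …, W_{k-1}`. -/
def iterGate {D : Type*} [Fintype D] [DecidableEq D] (U : Matrix D D ℂ)
    (W : ℕ → Matrix D D ℂ) : ℕ → Matrix D D ℂ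
  | 0 => U
  | k + 1 => U * W k * iterGate U W k

/-!
For unitary `U` both `ρ_R(U)` and `ρ_T(U)` are density matrices on `ℂ^N ⊗ ℂ^N`, so
`1/N² ≤ X(U)` and `Y(U) ≤ 1`. Since `g_t(U) = 2` says `Y(U) - X(U) = 1 - 1/N²`, it forces
`Y(U) = 1`: `ρ_T(U)` is pure. Writing `ρ_T(U) = M M†` with `M = S U_Γ / N`, purity makes `M`, hence
`S U_Γ`, a rank-one matrix `x yᵀ`, and this says exactly that `U = (A ⊗ B) S` with
`A_{iβ} = y_{(i,β)}`, `B_{αj} = x_{(α,j)}`. Then `A ⊗ B = U S` is unitary, which forces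
`A A† = c·1` and `B B† = c⁻¹·1` with `c > 0`, and rescaling makes both factors unitary.
Conversely, for `U = (A ⊗ B) S` the reshuffled matrix `(A ⊗ Bᵀ) S` is unitary, so `X(U) = 1/N²`,
and `S U_Γ` has rank one, so `Y(U) = 1`.
-/

section SumSq

variable {ι : Type*} [Fintype ι] {f : ι → ℝ}

theorem sum_sq_le_one_of_sum_eq_one (hf : ∀ i, 0 ≤ f i) (h : ∑ i, f i = 1) :
    ∑ i, f i ^ 2 ≤ 1 := by
  simpa [h] using Finset.sum_sq_le_sq_sum_of_nonneg (s := Finset.univ) fun i _ => hf i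

theorem one_le_card_mul_sum_sq_of_sum_eq_one (h : ∑ i, f i = 1) :
    1 ≤ Fintype.card ι * ∑ i, f i ^ 2 := by
  simpa [h] using sq_sum_le_card_mul_sum_sq (s := Finset.univ) (f := f)

theorem exists_eq_single_of_sum_sq_eq_one [DecidableEq ι] (hf : ∀ i, 0 ≤ f i)
    (h : ∑ i, f i = 1) (h2 : ∑ i, f i ^ 2 = 1) : ∃ i, f = Pi.single i 1 := by
  have hle : ∀ i, f i ≤ 1 := fun i =>
    h ▸ Finset.single_le_sum (fun j _ => hf j) (Finset.mem_univ i)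
  have hmid : ∀ i, f i - f i ^ 2 = 0 := by
    refine fun i => (Finset.sum_eq_zero_iff_of_nonneg (f := fun j => f j - f j ^ 2)
      fun j _ => ?_).mp ?_ i (Finset.mem_univ i)
    · nlinarith [hf j, hle j]
    · rw [Finset.sum_sub_distrib, h, h2, sub_self]
  obtain ⟨i, hi⟩ : ∃ i, f i ≠ 0 := by
    by_contra! h0
    simp [h0] at h
  have hi1 : f i = 1 := by
    have : f i * (1 - f i) = 0 := by linear_combination hmid i
    linarith [(mul_eq_zero.mp this).resolve_left hi]
  refine ⟨i, funext fun j => ?_⟩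
  rcases eq_or_ne j i with rfl | hji
  · simpa using hi1
  · have : f i + f j ≤ 1 := by
      rw [← h, ← Finset.sum_pair hji.symm]
      exact Finset.sum_le_sum_of_subset_of_nonneg (Finset.subset_univ _) fun k _ _ => hf k
    simp only [Pi.single_apply, hji, if_false]
    linarith [hf j]

end SumSq

namespace Matrix

section Trace

variable {m n : Type*} [Fintype m] [Fintype n]

theorem trace_vecMulVec_mul_self {R : Type*} [CommSemiring R] (x y : n → R) :
    (vecMulVec x y * vecMulVec x y).trace = (vecMulVec x y).trace ^ 2 := by
  rw [vecMulVec_mul_vecMulVec, trace_vecMulVec, trace_vecMulVec, dotProduct_smul, smul_eq_mul, sq,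
    dotProduct_comm]

theorem trace_mul_conjTranspose_eq_sum {R : Type*} [NonUnitalNonAssocSemiring R] [StarRing R]
    (M : Matrix m n R) : (M * Mᴴ).trace = ∑ z : m × n, M z.1 z.2 * star (M z.1 z.2) := by
  simp [trace, mul_apply, Fintype.sum_prod_type]

theorem trace_mul_conjTranspose_of_mem_unitaryGroup {R : Type*} [CommRing R] [StarRing R]
    [DecidableEq n] {U : Matrix n n R} (hU : U ∈ unitaryGroup n R) :
    (U * Uᴴ).trace = Fintype.card n := by
  rw [← star_eq_conjTranspose, mem_unitaryGroup_iff.mp hU, trace_one]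

end Trace

section Spectral

open scoped ComplexOrder

variable {𝕜 : Type*} [RCLike 𝕜] {n : Type*} [Fintype n]

theorem exists_eq_vecMulVec_of_mul_conjTranspose_eq {m : Type*} (M : Matrix m n 𝕜) (u : m → 𝕜)
    (h : M * Mᴴ = vecMulVec u (star u)) : ∃ b : n → 𝕜, M = vecMulVec u b := by
  have hrow : ∀ a c, M a ⬝ᵥ star (M c) = u a * star (u c) := fun a c =>
    congrFun (congrFun h a) c
  -- expanding with `hrow`, the row `u i • M k - u k • M i` has zero norm
  have key : ∀ i k, u i • M k = u k • M i := fun i k => by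
    rw [← sub_eq_zero, ← dotProduct_star_self_eq_zero]
    simp only [star_sub, star_smul, sub_dotProduct, dotProduct_sub, smul_dotProduct,
      dotProduct_smul, smul_eq_mul, dotProduct_comm (star _), hrow, RCLike.star_def]
    ring
  by_cases hu : u = 0
  · subst hu
    exact ⟨0, by simpa using h⟩
  obtain ⟨p, hp⟩ : ∃ p, u p ≠ 0 := Function.ne_iff.mp hu
  refine ⟨(u p)⁻¹ • M p, ?_⟩
  ext i j
  have := congrFun (key i p) j
  simp only [Pi.smul_apply, smul_eq_mul] at this
  rw [vecMulVec_apply, Pi.smul_apply, smul_eq_mul]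
  field_simp
  linear_combination -this

variable [DecidableEq n] {A : Matrix n n 𝕜}

theorem IsHermitian.re_trace_mul_self (hA : A.IsHermitian) :
    RCLike.re (A * A).trace = ∑ i, hA.eigenvalues i ^ 2 := by
  conv_lhs => rw [hA.spectral_theorem, ← map_mul, Unitary.conjStarAlgAut_apply, trace_mul_cycle,
    Unitary.coe_star_mul_self, one_mul, diagonal_mul_diagonal, trace_diagonal]
  simp [sq]

theorem IsHermitian.sum_eigenvalues_eq_one (hA : A.IsHermitian) (h : A.trace = 1) :
    ∑ i, hA.eigenvalues i = 1 := by
  have := hA.trace_eq_sum_eigenvalues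
  rw [h] at this
  exact_mod_cast this.symm

theorem IsHermitian.one_le_card_mul_re_trace_mul_self (hA : A.IsHermitian) (h : A.trace = 1) :
    1 ≤ Fintype.card n * RCLike.re (A * A).trace := by
  rw [hA.re_trace_mul_self]
  exact one_le_card_mul_sum_sq_of_sum_eq_one (hA.sum_eigenvalues_eq_one h)

theorem PosSemidef.re_trace_mul_self_le_one (hA : A.PosSemidef) (h : A.trace = 1) :
    RCLike.re (A * A).trace ≤ 1 := by
  rw [hA.1.re_trace_mul_self]
  exact sum_sq_le_one_of_sum_eq_one hA.eigenvalues_nonneg (hA.1.sum_eigenvalues_eq_one h)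

theorem PosSemidef.exists_eq_vecMulVec_of_re_trace_mul_self_eq_one (hA : A.PosSemidef)
    (h : A.trace = 1) (h2 : RCLike.re (A * A).trace = 1) :
    ∃ w : n → 𝕜, A = vecMulVec w (star w) := by
  rw [hA.1.re_trace_mul_self] at h2
  obtain ⟨i, hi⟩ := exists_eq_single_of_sum_sq_eq_one hA.eigenvalues_nonneg
    (hA.1.sum_eigenvalues_eq_one h) h2
  refine ⟨hA.1.eigenvectorUnitary *ᵥ Pi.single i 1, ?_⟩
  have hD : diagonal (RCLike.ofReal ∘ Pi.single i (1 : ℝ)) =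
      vecMulVec (Pi.single i (1 : 𝕜)) (Pi.single i 1) := by
    rw [← single_eq_single_vecMulVec_single, ← diagonal_single]
    congr 1
    ext j
    by_cases hj : j = i <;> simp [hj]
  conv_lhs => rw [hA.1.spectral_theorem, Unitary.conjStarAlgAut_apply, hi, hD, mul_vecMulVec,
    vecMulVec_mul]
  rw [star_mulVec, star_eq_conjTranspose]
  congr
  ext j
  by_cases hj : j = i <;> simp [hj]

end Spectral

section Kronecker

variable {m n : Type*} [DecidableEq m] [DecidableEq n] [Nonempty m] [Nonempty n]

theorem exists_eq_smul_one_of_kronecker_eq_one {K : Type*} [Field K] {P : Matrix m m K}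
    {Q : Matrix n n K} (h : P ⊗ₖ Q = 1) : ∃ c : K, c ≠ 0 ∧ P = c • 1 ∧ Q = c⁻¹ • 1 := by
  have hPQ : ∀ i i' a a', P i i' * Q a a' = (1 : Matrix m m K) i i' * (1 : Matrix n n K) a a' :=
    fun i i' a a' => congrFun (congrFun (h.trans one_kronecker_one.symm) (i, a)) (i', a')
  obtain ⟨i₀⟩ := ‹Nonempty m›
  obtain ⟨a₀⟩ := ‹Nonempty n›
  have h₀ : P i₀ i₀ * Q a₀ a₀ = 1 := by simpa using hPQ i₀ i₀ a₀ a₀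
  refine ⟨P i₀ i₀, left_ne_zero_of_mul_eq_one h₀, ?_, ?_⟩
  · ext i i'
    have := hPQ i i' a₀ a₀
    rw [one_apply_eq, mul_one] at this
    rw [smul_apply, smul_eq_mul, ← this]
    linear_combination (-P i i') * h₀
  · ext a a'
    have := hPQ i₀ i₀ a a'
    rw [one_apply_eq, one_mul] at this
    rw [smul_apply, smul_eq_mul, ← this, inv_mul_cancel_left₀ (left_ne_zero_of_mul_eq_one h₀)]

open scoped ComplexOrder in
theorem exists_kronecker_eq_of_kronecker_mem_unitaryGroup [Fintype m] [Fintype n] {𝕜 : Type*}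
    [RCLike 𝕜] {A : Matrix m m 𝕜} {B : Matrix n n 𝕜} (h : A ⊗ₖ B ∈ unitaryGroup (m × n) 𝕜) :
    ∃ A' ∈ unitaryGroup m 𝕜, ∃ B' ∈ unitaryGroup n 𝕜, A ⊗ₖ B = A' ⊗ₖ B' := by
  have hkron : (A * Aᴴ) ⊗ₖ (B * Bᴴ) = 1 := by
    rw [mul_kronecker_mul, ← conjTranspose_kronecker, ← star_eq_conjTranspose]
    exact mem_unitaryGroup_iff.mp h
  obtain ⟨c, hc, hA, hB⟩ := exists_eq_smul_one_of_kronecker_eq_one hkron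
  obtain ⟨i₀⟩ := ‹Nonempty m›
  have hc_pos : 0 < c := by
    refine lt_of_le_of_ne ?_ hc.symm
    simpa [hA] using (posSemidef_self_mul_conjTranspose A).diag_nonneg (i := i₀)
  obtain ⟨r, hr, rfl⟩ := RCLike.pos_iff_exists_ofReal.mp hc_pos
  have hs : (√r : 𝕜) ≠ 0 := by exact_mod_cast (Real.sqrt_pos.mpr hr).ne'
  have hsq : (√r : 𝕜) * (√r : 𝕜) = r := by exact_mod_cast Real.mul_self_sqrt hr.le
  refine ⟨(√r : 𝕜)⁻¹ • A, ?_, (√r : 𝕜) • B, ?_, by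
    rw [smul_kronecker, kronecker_smul, smul_smul, inv_mul_cancel₀ hs, one_smul]⟩
  all_goals
    simp only [mem_unitaryGroup_iff, star_eq_conjTranspose, conjTranspose_smul, Matrix.smul_mul,
      Matrix.mul_smul, hA, hB, smul_smul, star_inv₀, RCLike.star_def, RCLike.conj_ofReal]
    rw [← hsq]
    simp [hs]

end Kronecker

end Matrix

section SwapGate

variable {N : ℕ}

theorem swapGate_mul_apply (M : Matrix (Fin N × Fin N) (Fin N × Fin N) ℂ) (p q : Fin N × Fin N) :
    (swapGate N * M) p q = M p.swap q := by
  simp [mul_apply, swapGate, Fintype.sum_prod_type, ite_and]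
  rfl

theorem mul_swapGate_apply (M : Matrix (Fin N × Fin N) (Fin N × Fin N) ℂ) (p q : Fin N × Fin N) :
    (M * swapGate N) p q = M p q.swap := by
  simp [mul_apply, swapGate, Fintype.sum_prod_type, ite_and]
  rfl

theorem conjTranspose_swapGate : (swapGate N)ᴴ = swapGate N := by
  ext p q
  simp [swapGate, and_comm, eq_comm]

theorem swapGate_mul_swapGate : swapGate N * swapGate N = 1 := by
  ext p q
  rw [swapGate_mul_apply]
  simp [swapGate, one_apply, Prod.ext_iff, and_comm]

theorem swapGate_mem_unitaryGroup : swapGate N ∈ unitaryGroup (Fin N × Fin N) ℂ := by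
  rw [mem_unitaryGroup_iff, star_eq_conjTranspose, conjTranspose_swapGate, swapGate_mul_swapGate]

theorem kronecker_mul_swapGate_apply (A B : Matrix (Fin N) (Fin N) ℂ) (p q : Fin N × Fin N) :
    ((A ⊗ₖ B) * swapGate N) p q = A p.1 q.2 * B p.2 q.1 := by
  rw [mul_swapGate_apply]
  rfl

end SwapGate

section Purities

open scoped ComplexOrder

variable {N : ℕ}

theorem trace_reshuffle_mul_conjTranspose (U : Matrix (Fin N × Fin N) (Fin N × Fin N) ℂ) :
    (reshuffle N U * (reshuffle N U)ᴴ).trace = (U * Uᴴ).trace := by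
  simp only [trace_mul_conjTranspose_eq_sum]
  exact Fintype.sum_equiv (Equiv.prodProdProdComm _ _ _ _) _ _ fun _ => rfl

theorem trace_ptransp_mul_conjTranspose (U : Matrix (Fin N × Fin N) (Fin N × Fin N) ℂ) :
    (ptransp N U * (ptransp N U)ᴴ).trace = (U * Uᴴ).trace := by
  simp only [trace_mul_conjTranspose_eq_sum]
  have e : Function.Involutive fun z : (Fin N × Fin N) × (Fin N × Fin N) =>
    ((z.2.1, z.1.2), (z.1.1, z.2.2)) := fun _ => rfl
  exact Fintype.sum_equiv e.toPerm _ _ fun _ => rfl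

theorem rhoR_eq_mul_conjTranspose (U : Matrix (Fin N × Fin N) (Fin N × Fin N) ℂ) :
    rhoR N U = ((N : ℂ)⁻¹ • reshuffle N U) * ((N : ℂ)⁻¹ • reshuffle N U)ᴴ := by
  rw [conjTranspose_smul, Matrix.smul_mul, Matrix.mul_smul, smul_smul, rhoR, star_inv₀,
    star_natCast, ← mul_inv, sq]

theorem rhoT_eq_mul_conjTranspose (U : Matrix (Fin N × Fin N) (Fin N × Fin N) ℂ) :
    rhoT N U = ((N : ℂ)⁻¹ • (swapGate N * ptransp N U)) *
      ((N : ℂ)⁻¹ • (swapGate N * ptransp N U))ᴴ := by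
  rw [conjTranspose_smul, Matrix.smul_mul, Matrix.mul_smul, smul_smul, rhoT, star_inv₀,
    star_natCast, ← mul_inv, sq, conjTranspose_mul, conjTranspose_swapGate, Matrix.mul_assoc,
    Matrix.mul_assoc, Matrix.mul_assoc]

theorem posSemidef_rhoR (U : Matrix (Fin N × Fin N) (Fin N × Fin N) ℂ) :
    (rhoR N U).PosSemidef := by
  rw [rhoR_eq_mul_conjTranspose]
  exact posSemidef_self_mul_conjTranspose _

theorem posSemidef_rhoT (U : Matrix (Fin N × Fin N) (Fin N × Fin N) ℂ) :
    (rhoT N U).PosSemidef := by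
  rw [rhoT_eq_mul_conjTranspose]
  exact posSemidef_self_mul_conjTranspose _

variable [NeZero N] {U : Matrix (Fin N × Fin N) (Fin N × Fin N) ℂ}

theorem trace_rhoR (hU : U ∈ unitaryGroup (Fin N × Fin N) ℂ) : (rhoR N U).trace = 1 := by
  rw [rhoR, trace_smul, trace_reshuffle_mul_conjTranspose,
    trace_mul_conjTranspose_of_mem_unitaryGroup hU, Fintype.card_prod, Fintype.card_fin,
    Nat.cast_mul, ← sq, smul_eq_mul, inv_mul_cancel₀ (by simp [NeZero.ne N])]

theorem trace_rhoT (hU : U ∈ unitaryGroup (Fin N × Fin N) ℂ) : (rhoT N U).trace = 1 := by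
  rw [rhoT, trace_smul, trace_mul_cycle, ← Matrix.mul_assoc, swapGate_mul_swapGate, Matrix.one_mul,
    trace_ptransp_mul_conjTranspose, trace_mul_conjTranspose_of_mem_unitaryGroup hU,
    Fintype.card_prod, Fintype.card_fin, Nat.cast_mul, ← sq, smul_eq_mul,
    inv_mul_cancel₀ (by simp [NeZero.ne N])]

theorem inv_sq_le_Xpur (hU : U ∈ unitaryGroup (Fin N × Fin N) ℂ) : ((N : ℝ) ^ 2)⁻¹ ≤ Xpur N U := by
  have h := (posSemidef_rhoR U).1.one_le_card_mul_re_trace_mul_self (trace_rhoR hU)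
  rw [Fintype.card_prod, Fintype.card_fin, Nat.cast_mul, ← sq] at h
  rw [inv_le_iff_one_le_mul₀' (pow_pos (Nat.cast_pos.mpr (NeZero.pos N)) 2)]
  exact h

theorem Ypur_le_one (hU : U ∈ unitaryGroup (Fin N × Fin N) ℂ) : Ypur N U ≤ 1 :=
  (posSemidef_rhoT U).re_trace_mul_self_le_one (trace_rhoT hU)

end Purities

section LocalSwap

variable {N : ℕ}

theorem reshuffle_kronecker_mul_swapGate (A B : Matrix (Fin N) (Fin N) ℂ) :
    reshuffle N ((A ⊗ₖ B) * swapGate N) = (A ⊗ₖ Bᵀ) * swapGate N := by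
  ext p q
  simp only [reshuffle, of_apply, kronecker_mul_swapGate_apply, transpose_apply]

theorem swapGate_mul_ptransp_kronecker_mul_swapGate (A B : Matrix (Fin N) (Fin N) ℂ) :
    swapGate N * ptransp N ((A ⊗ₖ B) * swapGate N) =
      vecMulVec (Function.uncurry B) (Function.uncurry A) := by
  ext p q
  rw [swapGate_mul_apply, vecMulVec_apply, ptransp, of_apply, kronecker_mul_swapGate_apply]
  exact mul_comm (A q.1 q.2) (B p.1 p.2)

theorem eq_kronecker_mul_swapGate_of_swapGate_mul_ptransp_eq
    {U : Matrix (Fin N × Fin N) (Fin N × Fin N) ℂ} {x y : Fin N × Fin N → ℂ}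
    (h : swapGate N * ptransp N U = vecMulVec x y) :
    U = (of (Function.curry y) ⊗ₖ of (Function.curry x)) * swapGate N := by
  ext ⟨i, a⟩ ⟨j, b⟩
  have := congrFun (congrFun h (a, j)) (i, b)
  rw [swapGate_mul_apply, vecMulVec_apply] at this
  rw [kronecker_mul_swapGate_apply, mul_comm]
  exact this

variable [NeZero N] {A B : Matrix (Fin N) (Fin N) ℂ}

theorem Xpur_kronecker_mul_swapGate (hA : A ∈ unitaryGroup (Fin N) ℂ)
    (hB : B ∈ unitaryGroup (Fin N) ℂ) : Xpur N ((A ⊗ₖ B) * swapGate N) = ((N : ℝ) ^ 2)⁻¹ := by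
  have hW : (A ⊗ₖ Bᵀ) * swapGate N ∈ unitaryGroup (Fin N × Fin N) ℂ :=
    mul_mem (kronecker_mem_unitary hA (transpose_mem_unitaryGroup_iff.mpr hB))
      swapGate_mem_unitaryGroup
  have hρ : rhoR N ((A ⊗ₖ B) * swapGate N) = ((N : ℂ) ^ 2)⁻¹ • 1 := by
    rw [rhoR, reshuffle_kronecker_mul_swapGate, ← star_eq_conjTranspose, mem_unitaryGroup_iff.mp hW]
  have hN : (N : ℂ) ≠ 0 := Nat.cast_ne_zero.mpr (NeZero.ne N)
  rw [Xpur, hρ, smul_mul_smul, mul_one, trace_smul, trace_one, Fintype.card_prod, Fintype.card_fin,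
    smul_eq_mul, show ((N : ℂ) ^ 2)⁻¹ * ((N : ℂ) ^ 2)⁻¹ * ((N * N : ℕ) : ℂ) = ((N : ℝ) ^ 2)⁻¹ by
      push_cast
      field_simp, Complex.ofReal_re]

theorem Ypur_eq_one_of_swapGate_mul_ptransp_eq {U : Matrix (Fin N × Fin N) (Fin N × Fin N) ℂ}
    (hU : U ∈ unitaryGroup (Fin N × Fin N) ℂ) {x y : Fin N × Fin N → ℂ}
    (h : swapGate N * ptransp N U = vecMulVec x y) : Ypur N U = 1 := by
  obtain ⟨a, b, hab⟩ : ∃ a b, rhoT N U = vecMulVec a b :=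
    ⟨_, _, by rw [rhoT_eq_mul_conjTranspose, h, ← smul_vecMulVec, vecMulVec_mul]⟩
  rw [Ypur, hab, trace_vecMulVec_mul_self, ← hab, trace_rhoT hU]
  simp

theorem Ypur_kronecker_mul_swapGate (hA : A ∈ unitaryGroup (Fin N) ℂ)
    (hB : B ∈ unitaryGroup (Fin N) ℂ) : Ypur N ((A ⊗ₖ B) * swapGate N) = 1 :=
  Ypur_eq_one_of_swapGate_mul_ptransp_eq
    (mul_mem (kronecker_mem_unitary hA hB) swapGate_mem_unitaryGroup)
    (swapGate_mul_ptransp_kronecker_mul_swapGate A B)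

theorem gateTyp_kronecker_mul_swapGate (hN : 2 ≤ N) (hA : A ∈ unitaryGroup (Fin N) ℂ)
    (hB : B ∈ unitaryGroup (Fin N) ℂ) : gateTyp N ((A ⊗ₖ B) * swapGate N) = 2 := by
  have hN' : (2 : ℝ) ≤ N := by exact_mod_cast hN
  have : (N : ℝ) ^ 2 - 1 ≠ 0 := by nlinarith
  rw [gateTyp, Xpur_kronecker_mul_swapGate hA hB, Ypur_kronecker_mul_swapGate hA hB]
  field_simp
  ring

theorem ep_kronecker_mul_swapGate (hA : A ∈ unitaryGroup (Fin N) ℂ)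
    (hB : B ∈ unitaryGroup (Fin N) ℂ) : ep N ((A ⊗ₖ B) * swapGate N) = 0 := by
  have : (N : ℝ) ≠ 0 := Nat.cast_ne_zero.mpr (NeZero.ne N)
  rw [ep, Xpur_kronecker_mul_swapGate hA hB, Ypur_kronecker_mul_swapGate hA hB]
  field_simp
  ring

end LocalSwap

section Converse

variable {N : ℕ} {U : Matrix (Fin N × Fin N) (Fin N × Fin N) ℂ}

theorem Ypur_eq_one_of_gateTyp_eq_two (hN : 2 ≤ N) (hU : U ∈ unitaryGroup (Fin N × Fin N) ℂ)
    (h : gateTyp N U = 2) : Ypur N U = 1 := by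
  have : NeZero N := ⟨by omega⟩
  have hN' : (2 : ℝ) ≤ N := by exact_mod_cast hN
  have : (N : ℝ) ^ 2 - 1 ≠ 0 := by nlinarith
  have hYX : Ypur N U - Xpur N U = 1 - ((N : ℝ) ^ 2)⁻¹ := by
    rw [gateTyp] at h
    field_simp at h ⊢
    linarith
  linarith [inv_sq_le_Xpur hU, Ypur_le_one hU]

theorem exists_kronecker_mul_swapGate_of_Ypur_eq_one [NeZero N]
    (hU : U ∈ unitaryGroup (Fin N × Fin N) ℂ) (h : Ypur N U = 1) :
    ∃ A B : Matrix (Fin N) (Fin N) ℂ, A ∈ unitaryGroup (Fin N) ℂ ∧ B ∈ unitaryGroup (Fin N) ℂ ∧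
      U = (A ⊗ₖ B) * swapGate N := by
  obtain ⟨w, hw⟩ :=
    (posSemidef_rhoT U).exists_eq_vecMulVec_of_re_trace_mul_self_eq_one (trace_rhoT hU) h
  rw [rhoT_eq_mul_conjTranspose] at hw
  obtain ⟨b, hb⟩ := exists_eq_vecMulVec_of_mul_conjTranspose_eq _ w hw
  have hN : (N : ℂ) ≠ 0 := Nat.cast_ne_zero.mpr (NeZero.ne N)
  have hSP : swapGate N * ptransp N U = vecMulVec ((N : ℂ) • w) b := by
    rw [smul_vecMulVec, ← hb, smul_smul, mul_inv_cancel₀ hN, one_smul]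
  have hU' := eq_kronecker_mul_swapGate_of_swapGate_mul_ptransp_eq hSP
  have hkron : of (Function.curry b) ⊗ₖ of (Function.curry ((N : ℂ) • w)) ∈
      unitaryGroup (Fin N × Fin N) ℂ := by
    rw [← Matrix.mul_one (_ ⊗ₖ _), ← swapGate_mul_swapGate, ← Matrix.mul_assoc, ← hU']
    exact mul_mem hU swapGate_mem_unitaryGroup
  obtain ⟨A, hA, B, hB, hAB⟩ := exists_kronecker_eq_of_kronecker_mem_unitaryGroup hkron
  exact ⟨A, B, hA, hB, hAB ▸ hU'⟩

end Converse

/-- For a unitary `U` on `ℂ^N ⊗ ℂ^N`, `g_t(U) = 2` iff `U` is locally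
equivalent to the swap gate, `U = (A ⊗ B) S`. In particular `g_t(S) = 2` and
`e_p(S) = 0`. -/
theorem gate_typicality_two_iff_swap (N : ℕ) (hN : 2 ≤ N)
    (U : Matrix (Fin N × Fin N) (Fin N × Fin N) ℂ)
    (hU : U ∈ Matrix.unitaryGroup (Fin N × Fin N) ℂ) :
    (gateTyp N U = 2 ↔
      ∃ A B : Matrix (Fin N) (Fin N) ℂ,
        A ∈ Matrix.unitaryGroup (Fin N) ℂ ∧ B ∈ Matrix.unitaryGroup (Fin N) ℂ ∧
          U = (A ⊗ₖ B) * swapGate N) ∧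
    gateTyp N (swapGate N) = 2 ∧ ep N (swapGate N) = 0 := by
  have : NeZero N := ⟨by omega⟩
  have hS : swapGate N = ((1 : Matrix (Fin N) (Fin N) ℂ) ⊗ₖ 1) * swapGate N := by
    rw [one_kronecker_one, Matrix.one_mul]
  refine ⟨⟨fun h => exists_kronecker_mul_swapGate_of_Ypur_eq_one hU
    (Ypur_eq_one_of_gateTyp_eq_two hN hU h), ?_⟩, ?_, ?_⟩
  · rintro ⟨A, B, hA, hB, rfl⟩
    exact gateTyp_kronecker_mul_swapGate hN hA hB
  · rw [hS]
    exact gateTyp_kronecker_mul_swapGate hN (one_mem _) (one_mem _)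
  · rw [hS]
    exact ep_kronecker_mul_swapGate (one_mem _) (one_mem _)
end
end

section
/- Let N ≥ 2 and let U be a unitary on ℂ^N ⊗ ℂ^N. Then S·(SU)_R = U_Γ, and consequently tr[ρ_R(SU)²] = tr[ρ_T(U)²] and tr[ρ_R(US)²] = tr[ρ_R(SU)²]; equivalently, the operator entanglements satisfy E(SU) = E(US) = 1 − tr[ρ_T(U)²]. -/
open Matrix MeasureTheory
open scoped Kronecker

noncomputable section

lemma swap_mul_apply (N : ℕ) (M : Matrix (Fin N × Fin N) (Fin N × Fin N) ℂ) (p q) :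
    (swapGate N * M) p q = M (p.2, p.1) q := by
  classical
  rw [Matrix.mul_apply, Finset.sum_eq_single ((p.2, p.1) : Fin N × Fin N)]
  · simp [swapGate]
  · rintro ⟨b1, b2⟩ _ hb
    simp only [swapGate, Matrix.of_apply]
    rw [if_neg, zero_mul]
    rintro ⟨h1, h2⟩
    exact hb (by simp [Prod.ext_iff, h1.symm, h2.symm])
  · intro h; exact absurd (Finset.mem_univ _) h

lemma mul_swap_apply (N : ℕ) (M : Matrix (Fin N × Fin N) (Fin N × Fin N) ℂ) (p q) :
    (M * swapGate N) p q = M p (q.2, q.1) := by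
  classical
  rw [Matrix.mul_apply, Finset.sum_eq_single ((q.2, q.1) : Fin N × Fin N)]
  · simp [swapGate]
  · rintro ⟨b1, b2⟩ _ hb
    simp only [swapGate, Matrix.of_apply]
    rw [if_neg, mul_zero]
    rintro ⟨h1, h2⟩
    exact hb (by simp [Prod.ext_iff, h1, h2])
  · intro h; exact absurd (Finset.mem_univ _) h

lemma swap_mul_swap (N : ℕ) : swapGate N * swapGate N = 1 := by
  ext p q
  rw [swap_mul_apply]
  simp [swapGate, Matrix.one_apply, Prod.ext_iff, and_comm]

lemma swap_conjTranspose (N : ℕ) : (swapGate N)ᴴ = swapGate N := by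
  ext p q
  simp only [Matrix.conjTranspose_apply, swapGate, Matrix.of_apply]
  by_cases h : q.1 = p.2 ∧ q.2 = p.1
  · rw [if_pos h, if_pos ⟨h.2.symm, h.1.symm⟩]; simp
  · rw [if_neg h, if_neg (fun hc => h ⟨hc.2.symm, hc.1.symm⟩)]; simp

lemma swap_reshuffle_eq (N : ℕ) (U : Matrix (Fin N × Fin N) (Fin N × Fin N) ℂ) :
    swapGate N * reshuffle N (swapGate N * U) = ptransp N U := by
  ext p q
  rw [swap_mul_apply]
  simp [reshuffle, ptransp, swap_mul_apply]

lemma reshuffle_swap_mul (N : ℕ) (U : Matrix (Fin N × Fin N) (Fin N × Fin N) ℂ) :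
    reshuffle N (swapGate N * U) = swapGate N * ptransp N U := by
  rw [← swap_reshuffle_eq N U, ← Matrix.mul_assoc, swap_mul_swap, Matrix.one_mul]

lemma rhoR_swap_mul (N : ℕ) (U : Matrix (Fin N × Fin N) (Fin N × Fin N) ℂ) :
    rhoR N (swapGate N * U) = rhoT N U := by
  unfold rhoR rhoT
  rw [reshuffle_swap_mul, Matrix.conjTranspose_mul, swap_conjTranspose]
  rw [Matrix.mul_assoc, Matrix.mul_assoc, Matrix.mul_assoc]

lemma reshuffle_mul_swap (N : ℕ) (U : Matrix (Fin N × Fin N) (Fin N × Fin N) ℂ) :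
    reshuffle N (U * swapGate N) = (reshuffle N (swapGate N * U))ᵀ := by
  ext p q
  simp [reshuffle, Matrix.transpose_apply, swap_mul_apply, mul_swap_apply]

lemma trace_sq_transpose {D : Type*} [Fintype D] [DecidableEq D] (c : ℂ)
    (B : Matrix D D ℂ) :
    ((c • (Bᵀ * Bᵀᴴ)) * (c • (Bᵀ * Bᵀᴴ))).trace
      = ((c • (B * Bᴴ)) * (c • (B * Bᴴ))).trace := by
  have h : Bᵀ * Bᵀᴴ = (Bᴴ * B)ᵀ := by
    ext i j
    simp [Matrix.mul_apply, Matrix.conjTranspose_apply, mul_comm]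
  rw [h]
  rw [Matrix.smul_mul, Matrix.mul_smul, Matrix.smul_mul, Matrix.mul_smul,
    Matrix.trace_smul, Matrix.trace_smul, Matrix.trace_smul, Matrix.trace_smul]
  congr 2
  rw [← Matrix.transpose_mul, Matrix.trace_transpose]
  have h2 : (Bᴴ * B) * (Bᴴ * B) = Bᴴ * (B * Bᴴ * B) := by
    simp [Matrix.mul_assoc]
  rw [h2, Matrix.trace_mul_comm]
  simp [Matrix.mul_assoc]

/-- `S (SU)_R = U_Γ`; consequently `tr[ρ_R(SU)²] = tr[ρ_T(U)²]` and
`tr[ρ_R(US)²] = tr[ρ_R(SU)²]`, i.e. `E(SU) = E(US) = 1 - tr[ρ_T(U)²]`. -/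
theorem swap_reshuffle_partial_transpose (N : ℕ) (hN : 2 ≤ N)
    (U : Matrix (Fin N × Fin N) (Fin N × Fin N) ℂ)
    (hU : U ∈ Matrix.unitaryGroup (Fin N × Fin N) ℂ) :
    swapGate N * reshuffle N (swapGate N * U) = ptransp N U ∧
      (rhoR N (swapGate N * U) * rhoR N (swapGate N * U)).trace
        = (rhoT N U * rhoT N U).trace ∧
      (rhoR N (U * swapGate N) * rhoR N (U * swapGate N)).trace
        = (rhoR N (swapGate N * U) * rhoR N (swapGate N * U)).trace ∧
      1 - Xpur N (swapGate N * U) = 1 - Ypur N U ∧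
      1 - Xpur N (U * swapGate N) = 1 - Ypur N U := by
  have h1 := swap_reshuffle_eq N U
  have h2 : (rhoR N (swapGate N * U) * rhoR N (swapGate N * U)).trace
      = (rhoT N U * rhoT N U).trace := by rw [rhoR_swap_mul]
  have h3 : (rhoR N (U * swapGate N) * rhoR N (U * swapGate N)).trace
      = (rhoR N (swapGate N * U) * rhoR N (swapGate N * U)).trace := by
    unfold rhoR
    rw [reshuffle_mul_swap]
    exact trace_sq_transpose _ _
  refine ⟨h1, h2, h3, ?_, ?_⟩
  · have := congrArg Complex.re h2
    unfold Xpur Ypur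
    rw [this]
  · have := congrArg Complex.re (h3.trans h2)
    unfold Xpur Ypur
    rw [this]
end
end
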